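/- Let b > 0 and g > 1 with bg < 1, and set a = b(g−1)/(1−bg) > 0. Let ψ:ℝ→ℝ be the logistic function ψ(t) = e^t/(e^t+1), with derivative ψ'(t) = e^t/(e^t+1)². Then for every z ∈ [0,1), the MBBEFD density satisfies f_{b,g}(z) = (g−1)(b−1)log(b) b^{1−z} / ((g−1)b^{1−z} + (1−bg))² = (a+1) log(1/b) · ψ'( z log(1/b) + log(a) ). -/

import Mathlib

/-!
With `a = b(g-1)/(1-bg)` and `x = a b^{-z} = exp (z log(1/b) + log a)`, the denominator of the
density is `((1-bg)(x+1))²` and its numerator is `(1-bg)² (a+1) log(1/b) x`, so the density equals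
`(a+1) log(1/b) x/(x+1)²`, and `x/(x+1)² = ψ'(log x)`.
-/

/-- The MBBEFD density on `[0,1)` for parameters `g > 1`, `b > 0`, `b ≠ 1`, `bg ≠ 1`. -/
noncomputable def mbbefdDensity (b g : ℝ) : ℝ → ℝ := fun z =>
  (g - 1) * (b - 1) * Real.log b * b ^ (1 - z) /
    ((g - 1) * b ^ (1 - z) + (1 - b * g)) ^ 2

/-- The derivative `ψ'` of the logistic function `ψ(t) = eᵗ/(eᵗ+1)`. -/
noncomputable def logisticDeriv (t : ℝ) : ℝ := Real.exp t / (Real.exp t + 1) ^ 2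

open Real

theorem hasDerivAt_logistic (t : ℝ) :
    HasDerivAt (fun t => exp t / (exp t + 1)) (logisticDeriv t) t := by
  refine ((hasDerivAt_exp t).div ((hasDerivAt_exp t).add_const 1) (by positivity)).congr_deriv ?_
  rw [logisticDeriv]
  ring

theorem logisticDeriv_log {x : ℝ} (hx : 0 < x) : logisticDeriv (log x) = x / (x + 1) ^ 2 := by
  rw [logisticDeriv, exp_log hx]

theorem exp_mul_log_inv_add_log {a b : ℝ} (ha : 0 < a) (hb : 0 < b) (z : ℝ) :
    exp (z * log (1 / b) + log a) = a * b ^ (-z) := by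
  rw [exp_add, exp_log ha, mul_comm z, ← rpow_def_of_pos (by positivity), one_div,
    inv_rpow hb.le, rpow_neg hb.le, mul_comm]

theorem mbbefdDensity_eq_logisticDeriv {b g : ℝ} (hb : 0 < b)
    (ha : 0 < b * (g - 1) / (1 - b * g)) (z : ℝ) :
    mbbefdDensity b g z
      = (b * (g - 1) / (1 - b * g) + 1) * log (1 / b) *
        logisticDeriv (z * log (1 / b) + log (b * (g - 1) / (1 - b * g))) := by
  -- `1 - bg = 0` would make `a` the junk value `0`
  have hbg : 1 - b * g ≠ 0 := by
    rintro h
    simp [h] at ha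
  have ha_mul : b * (g - 1) / (1 - b * g) * (1 - b * g) = b * (g - 1) := div_mul_cancel₀ _ hbg
  rw [← log_exp (z * log (1 / b) + _), exp_mul_log_inv_add_log ha hb,
    logisticDeriv_log (mul_pos ha (rpow_pos_of_pos hb _)), mbbefdDensity, sub_eq_add_neg 1 z,
    rpow_add hb, rpow_one, one_div, log_inv]
  generalize b ^ (-z) = u
  generalize b * (g - 1) / (1 - b * g) = a at ha_mul ⊢
  have hden : (g - 1) * (b * u) + (1 - b * g) = (1 - b * g) * (a * u + 1) := by
    linear_combination (-u) * ha_mul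
  have hnum : (g - 1) * (b - 1) * log b * (b * u)
      = (1 - b * g) ^ 2 * ((a + 1) * -log b * (a * u)) := by
    linear_combination (log b * u * (a * (1 - b * g) - b + 1)) * ha_mul
  rw [hden, hnum, mul_pow, mul_div_mul_left _ _ (pow_ne_zero 2 hbg), mul_div_assoc]

/-- For `b > 0`, `g > 1` with `bg < 1`, setting `a = b(g-1)/(1-bg) > 0`,
the logistic function `ψ(t) = eᵗ/(eᵗ+1)` has derivative `ψ'(t) = eᵗ/(eᵗ+1)²`, and for
every `z ∈ [0,1)` the MBBEFD density satisfies
`f_{b,g}(z) = (a+1) log(1/b) ψ'(z log(1/b) + log a)`. -/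
theorem statement8 (b g : ℝ) (hb : 0 < b) (hg : 1 < g) (hbg : b * g < 1) :
    0 < b * (g - 1) / (1 - b * g) ∧
    (∀ t : ℝ, HasDerivAt (fun t => Real.exp t / (Real.exp t + 1)) (logisticDeriv t) t) ∧
    (∀ z ∈ Set.Ico (0:ℝ) 1,
      mbbefdDensity b g z
        = (b * (g - 1) / (1 - b * g) + 1) * Real.log (1 / b) *
          logisticDeriv (z * Real.log (1 / b) + Real.log (b * (g - 1) / (1 - b * g)))) := by
  have ha : 0 < b * (g - 1) / (1 - b * g) := div_pos (mul_pos hb (by linarith)) (by linarith)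
  exact ⟨ha, hasDerivAt_logistic, fun z _ => mbbefdDensity_eq_logisticDeriv hb ha z⟩
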